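/- arXiv:2306.10789 — 3 statements merged into one kernel-verified Lean document; each statement's English description precedes it below -/
import Mathlib

section
/- Let X₁,…,Xₙ be points in ℝ^d, u ∈ ℝ^d with ‖u‖ < 1, and suppose q̂ ∈ ℝ^d minimizes q ↦ (1/n) Σᵢ (‖Xᵢ − q‖ − ⟨u, q⟩). Then for every h ∈ ℝ^d, | ⟨u, h⟩ + (1/n) Σ_{i : Xᵢ ≠ q̂} ⟨(Xᵢ − q̂)/‖Xᵢ − q̂‖, h⟩ | ≤ (‖h‖/n) · #{i : Xᵢ = q̂}. -/
open scoped RealInnerProductSpace Classical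
open Filter Topology Finset

/-! Perturb the minimizer along the ray `q̂ + t • h`, `t > 0`. A point equal to `q̂` contributes
exactly `t * ‖h‖`; for any other point, AM–GM `2‖a‖‖a - t • h‖ ≤ ‖a‖² + ‖a - t • h‖²` bounds
`‖a - t • h‖` by its first-order expansion plus `O(t²)`. Minimality then forces the first-order
coefficient to be nonnegative, and the directions `h` and `-h` give the two sides of the
absolute value. -/

variable {E : Type*} [NormedAddCommGroup E] [InnerProductSpace ℝ E]

lemma nonneg_of_forall_pos_mul_add_sq_nonneg {a C : ℝ} (h : ∀ t > 0, 0 ≤ t * a + t ^ 2 * C) :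
    0 ≤ a := by
  have hlim : Tendsto (fun t : ℝ => a + t * C) (𝓝[>] 0) (𝓝 a) := by
    have : Tendsto (fun t : ℝ => a + t * C) (𝓝 0) (𝓝 (a + 0 * C)) :=
      ((continuous_const.add (continuous_id.mul continuous_const)).tendsto 0)
    simpa using this.mono_left nhdsWithin_le_nhds
  refine ge_of_tendsto hlim (eventually_nhdsWithin_of_forall fun t (ht : 0 < t) => ?_)
  have hta : 0 ≤ t * (a + t * C) := by linarith [h t ht]
  exact nonneg_of_mul_nonneg_right hta ht

lemma norm_sub_smul_le {a : E} (ha : a ≠ 0) (h : E) (t : ℝ) :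
    ‖a - t • h‖ ≤ ‖a‖ - t * ⟪‖a‖⁻¹ • a, h⟫ + t ^ 2 * (‖h‖ ^ 2 / (2 * ‖a‖)) := by
  have hna : 0 < ‖a‖ := norm_pos_iff.mpr ha
  have hsq : ‖a - t • h‖ ^ 2 = ‖a‖ ^ 2 - 2 * (t * ⟪a, h⟫) + t ^ 2 * ‖h‖ ^ 2 := by
    rw [norm_sub_sq_real, real_inner_smul_right, norm_smul, mul_pow, Real.norm_eq_abs, sq_abs]
  have hamgm : 2 * ‖a‖ * ‖a - t • h‖ ≤ ‖a‖ ^ 2 + ‖a - t • h‖ ^ 2 := two_mul_le_add_sq _ _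
  rw [← mul_le_mul_iff_right₀ hna, real_inner_smul_left]
  have : ‖a‖ * (‖a‖ - t * (‖a‖⁻¹ * ⟪a, h⟫) + t ^ 2 * (‖h‖ ^ 2 / (2 * ‖a‖)))
      = ‖a‖ ^ 2 - t * ⟪a, h⟫ + t ^ 2 * ‖h‖ ^ 2 / 2 := by
    field_simp
  rw [this]
  nlinarith

variable {ι : Type*} [Fintype ι] [DecidableEq E]

lemma sum_norm_sub_add_smul_le (X : ι → E) (q h : E) {t : ℝ} (ht : 0 ≤ t) :
    ∑ i, ‖X i - (q + t • h)‖ ≤ ∑ i, ‖X i - q‖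
      + t * ((univ.filter fun i => X i = q).card * ‖h‖
        - ∑ i ∈ univ.filter (fun i => X i ≠ q), ⟪‖X i - q‖⁻¹ • (X i - q), h⟫)
      + t ^ 2 * ∑ i ∈ univ.filter (fun i => X i ≠ q), ‖h‖ ^ 2 / (2 * ‖X i - q‖) := by
  have hat : ∀ i ∈ univ.filter (fun i => X i = q), ‖X i - (q + t • h)‖ = ‖X i - q‖ + t * ‖h‖ := by
    intro i hi
    rw [(mem_filter.mp hi).2, sub_self, norm_zero, zero_add, sub_add_cancel_left, norm_neg,
      norm_smul, Real.norm_of_nonneg ht]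
  have off : ∀ i ∈ univ.filter (fun i => X i ≠ q), ‖X i - (q + t • h)‖ ≤
      ‖X i - q‖ - t * ⟪‖X i - q‖⁻¹ • (X i - q), h⟫ + t ^ 2 * (‖h‖ ^ 2 / (2 * ‖X i - q‖)) := by
    intro i hi
    rw [← sub_sub]
    exact norm_sub_smul_le (sub_ne_zero.mpr (mem_filter.mp hi).2) h t
  calc ∑ i, ‖X i - (q + t • h)‖
      = ∑ i ∈ univ.filter (fun i => X i = q), ‖X i - (q + t • h)‖
        + ∑ i ∈ univ.filter (fun i => X i ≠ q), ‖X i - (q + t • h)‖ :=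
        (sum_filter_add_sum_filter_not _ _ _).symm
    _ ≤ ∑ i ∈ univ.filter (fun i => X i = q), (‖X i - q‖ + t * ‖h‖)
        + ∑ i ∈ univ.filter (fun i => X i ≠ q), (‖X i - q‖ - t * ⟪‖X i - q‖⁻¹ • (X i - q), h⟫
          + t ^ 2 * (‖h‖ ^ 2 / (2 * ‖X i - q‖))) :=
        add_le_add (sum_congr rfl hat).le (sum_le_sum off)
    _ = _ := by
      simp only [sum_add_distrib, sum_sub_distrib, ← mul_sum, sum_const, nsmul_eq_mul]
      rw [← sum_filter_add_sum_filter_not univ (fun i => X i = q) (fun i => ‖X i - q‖)]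
      ring

lemma card_mul_inner_add_sum_le_of_minimizer (X : ι → E) (u q : E)
    (hmin : ∀ q', ∑ i, (‖X i - q‖ - ⟪u, q⟫) ≤ ∑ i, (‖X i - q'‖ - ⟪u, q'⟫)) (h : E) :
    Fintype.card ι * ⟪u, h⟫
      + ∑ i ∈ univ.filter (fun i => X i ≠ q), ⟪‖X i - q‖⁻¹ • (X i - q), h⟫
      ≤ (univ.filter fun i => X i = q).card * ‖h‖ := by
  suffices 0 ≤ (univ.filter fun i => X i = q).card * ‖h‖
      - ∑ i ∈ univ.filter (fun i => X i ≠ q), ⟪‖X i - q‖⁻¹ • (X i - q), h⟫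
      - Fintype.card ι * ⟪u, h⟫ by linarith
  refine nonneg_of_forall_pos_mul_add_sq_nonneg
    (C := ∑ i ∈ univ.filter (fun i => X i ≠ q), ‖h‖ ^ 2 / (2 * ‖X i - q‖)) fun t ht => ?_
  have hq := hmin (q + t • h)
  simp only [sum_sub_distrib, sum_const, card_univ, nsmul_eq_mul, inner_add_right,
    real_inner_smul_right] at hq
  linarith [sum_norm_sub_add_smul_le X q h ht.le]

lemma abs_card_mul_inner_add_sum_le_of_minimizer (X : ι → E) (u q : E)
    (hmin : ∀ q', ∑ i, (‖X i - q‖ - ⟪u, q⟫) ≤ ∑ i, (‖X i - q'‖ - ⟪u, q'⟫)) (h : E) :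
    |Fintype.card ι * ⟪u, h⟫
      + ∑ i ∈ univ.filter (fun i => X i ≠ q), ⟪‖X i - q‖⁻¹ • (X i - q), h⟫|
      ≤ (univ.filter fun i => X i = q).card * ‖h‖ := by
  have hneg := card_mul_inner_add_sum_le_of_minimizer X u q hmin (-h)
  simp only [inner_neg_right, sum_neg_distrib, norm_neg] at hneg
  exact abs_le.mpr ⟨by linarith, card_mul_inner_add_sum_le_of_minimizer X u q hmin h⟩

theorem stmt_7_general {d n : ℕ} (hn : 0 < n) (X : Fin n → EuclideanSpace ℝ (Fin d))
    (u : EuclideanSpace ℝ (Fin d)) (qhat : EuclideanSpace ℝ (Fin d))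
    (hmin : ∀ q : EuclideanSpace ℝ (Fin d),
      (1 / (n : ℝ)) * ∑ i, (‖X i - qhat‖ - ⟪u, qhat⟫) ≤
      (1 / (n : ℝ)) * ∑ i, (‖X i - q‖ - ⟪u, q⟫)) :
    ∀ h : EuclideanSpace ℝ (Fin d),
      |⟪u, h⟫ + (1 / (n : ℝ)) * ∑ i ∈ Finset.univ.filter (fun i => X i ≠ qhat),
          ⟪‖X i - qhat‖⁻¹ • (X i - qhat), h⟫| ≤
        (‖h‖ / (n : ℝ)) * ((Finset.univ.filter (fun i => X i = qhat)).card : ℝ) := by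
  intro h
  have hn' : (0 : ℝ) < n := Nat.cast_pos.mpr hn
  have key := abs_card_mul_inner_add_sum_le_of_minimizer X u qhat
    (fun q => le_of_mul_le_mul_left (hmin q) (one_div_pos.mpr hn')) h
  rw [Fintype.card_fin] at key
  calc _ = |((n : ℝ) * ⟪u, h⟫
        + ∑ i ∈ univ.filter (fun i => X i ≠ qhat), ⟪‖X i - qhat‖⁻¹ • (X i - qhat), h⟫) / n| := by
        field_simp
    _ ≤ (univ.filter fun i => X i = qhat).card * ‖h‖ / n := by
        rw [abs_div, abs_of_pos hn']
        exact div_le_div_of_nonneg_right key hn'.le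
    _ = _ := by ring

theorem stmt_7 {d n : ℕ} (hn : 0 < n) (X : Fin n → EuclideanSpace ℝ (Fin d))
    (u : EuclideanSpace ℝ (Fin d)) (hu : ‖u‖ < 1) (qhat : EuclideanSpace ℝ (Fin d))
    (hmin : ∀ q : EuclideanSpace ℝ (Fin d),
      (1 / (n : ℝ)) * ∑ i, (‖X i - qhat‖ - ⟪u, qhat⟫) ≤
      (1 / (n : ℝ)) * ∑ i, (‖X i - q‖ - ⟪u, q⟫)) :
    ∀ h : EuclideanSpace ℝ (Fin d),
      |⟪u, h⟫ + (1 / (n : ℝ)) * ∑ i ∈ Finset.univ.filter (fun i => X i ≠ qhat),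
          ⟪‖X i - qhat‖⁻¹ • (X i - qhat), h⟫| ≤
        (‖h‖ / (n : ℝ)) * ((Finset.univ.filter (fun i => X i = qhat)).card : ℝ) :=
  stmt_7_general hn X u qhat hmin
end

section
/- Let X be a random vector in ℝ^d whose distribution is not supported on any single straight line (i.e., not concentrated on a one-dimensional affine subspace), and let q ∈ ℝ^d with P[X = q] = 0. Then ‖E[(X − q)/‖X − q‖]‖ < 1. -/
/-! Each direction `(X - q) / ‖X - q‖` lies in the closed unit ball, and in a strictly convex space
the mean of a function bounded by `1` has norm `< 1` unless the function is a.e. constant. A constant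
direction `u` would put `X` a.s. on the line `q + ℝ u`, since `v = ‖v‖ • normalize v` for every `v`. -/

open MeasureTheory NormedSpace

theorem NormedSpace.norm_normalize_le_one {V : Type*} [NormedAddCommGroup V] [NormedSpace ℝ V]
    (x : V) : ‖normalize x‖ ≤ 1 :=
  mem_closedBall_zero_iff.mp (inv_norm_smul_mem_unitClosedBall x)

theorem norm_integral_normalize_sub_lt_one {α E : Type*} [MeasurableSpace α]
    [NormedAddCommGroup E] [NormedSpace ℝ E] [CompleteSpace E] [StrictConvexSpace ℝ E]
    {μ : Measure α} [IsProbabilityMeasure μ] {f : α → E}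
    (hf : ¬ ∃ a b : E, ∀ᵐ x ∂μ, ∃ t : ℝ, f x = a + t • b) (q : E) :
    ‖∫ x, normalize (f x - q) ∂μ‖ < 1 := by
  rcases ae_eq_const_or_norm_integral_lt_of_norm_le_const (μ := μ)
      (Filter.Eventually.of_forall fun x => norm_normalize_le_one (f x - q)) with hconst | hlt
  · refine absurd ⟨q, ⨍ x, normalize (f x - q) ∂μ, ?_⟩ hf
    filter_upwards [hconst] with x hx
    rw [Function.const_apply] at hx
    exact ⟨‖f x - q‖, by rw [← hx, norm_smul_normalize, add_sub_cancel]⟩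
  · simpa using hlt

theorem stmt_8_general {d : ℕ} {Ω : Type*} [MeasurableSpace Ω] (μ : Measure Ω) [IsProbabilityMeasure μ]
    (X : Ω → EuclideanSpace ℝ (Fin d))
    (hline : ¬ ∃ a b : EuclideanSpace ℝ (Fin d),
      ∀ᵐ ω ∂μ, ∃ t : ℝ, X ω = a + t • b)
    (q : EuclideanSpace ℝ (Fin d)) :
    ‖∫ ω, ‖X ω - q‖⁻¹ • (X ω - q) ∂μ‖ < 1 :=
  norm_integral_normalize_sub_lt_one hline q

theorem stmt_8 {d : ℕ} {Ω : Type*} [MeasurableSpace Ω] (μ : Measure Ω) [IsProbabilityMeasure μ]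
    (X : Ω → EuclideanSpace ℝ (Fin d)) (hX : AEMeasurable X μ)
    (hline : ¬ ∃ a b : EuclideanSpace ℝ (Fin d),
      ∀ᵐ ω ∂μ, ∃ t : ℝ, X ω = a + t • b)
    (q : EuclideanSpace ℝ (Fin d)) (hq : μ {ω | X ω = q} = 0) :
    ‖∫ ω, ‖X ω - q‖⁻¹ • (X ω - q) ∂μ‖ < 1 :=
  stmt_8_general μ X hline q
end

section
/- Let q ∈ ℝ^d with ‖q‖ > 0 and x ∈ ℝ^d with x ≠ q, and define W(x,q) = (‖x/‖q‖ − q/‖q‖‖^{-1} − 1)(x/‖q‖ − q/‖q‖). Then ‖q‖·‖W(x,q)‖ ≤ 3‖x‖ whenever ‖x‖ ≤ ‖q‖/2 (more generally the paper uses the bound ‖q‖·‖W(x,q)‖ ≤ 3‖x‖ for all x ≠ q with suitable constants). Formally: prove that for x ≠ q and ‖x‖ ≤ ‖q‖/2, ‖q‖ ‖W(x,q)‖ ≤ 3 ‖x‖. -/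
/-!
Writing `u = ‖q‖⁻¹ • (x - q)`, the vector `(‖u‖⁻¹ - 1) • u` has norm at most `|1 - ‖u‖|`, so
`‖q‖ ‖W(x, q)‖ ≤ |‖q‖ - ‖x - q‖|`, which is at most `‖x‖` by the reverse triangle inequality.
-/

theorem abs_norm_sub_norm_sub_le {E : Type*} [SeminormedAddCommGroup E] (q x : E) :
    |‖q‖ - ‖x - q‖| ≤ ‖x‖ := by
  simpa [abs_sub_comm] using abs_norm_sub_norm_le (x - q) (-q)

section

variable {E : Type*} [SeminormedAddCommGroup E] [NormedSpace ℝ E]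

-- Equality holds unless `‖u‖ = 0`, where the left side vanishes instead of being `1`.
theorem norm_inv_norm_sub_one_smul_le (u : E) : ‖(‖u‖⁻¹ - 1) • u‖ ≤ |1 - ‖u‖| := by
  rcases eq_or_ne ‖u‖ 0 with hu | hu
  · simp [hu]
  · rw [norm_smul, Real.norm_eq_abs, ← abs_norm u, ← abs_mul, abs_norm, sub_mul,
      inv_mul_cancel₀ hu, one_mul]

theorem mul_abs_one_sub_norm_inv_smul_le {r : ℝ} (hr : 0 ≤ r) (v : E) :
    r * |1 - ‖r⁻¹ • v‖| ≤ |r - ‖v‖| := by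
  rcases hr.eq_or_lt with rfl | hr
  · simp
  · rw [norm_smul, Real.norm_of_nonneg (inv_nonneg.mpr hr.le), ← abs_of_pos hr, ← abs_mul,
      abs_of_pos hr, mul_sub, mul_one, mul_inv_cancel_left₀ hr.ne']

end

theorem stmt_15_general {d : ℕ} (q x : EuclideanSpace ℝ (Fin d)) :
    ‖q‖ * ‖(‖‖q‖⁻¹ • x - ‖q‖⁻¹ • q‖⁻¹ - 1) • (‖q‖⁻¹ • x - ‖q‖⁻¹ • q)‖ ≤ 3 * ‖x‖ := by
  rw [← smul_sub]
  calc ‖q‖ * ‖(‖‖q‖⁻¹ • (x - q)‖⁻¹ - 1) • (‖q‖⁻¹ • (x - q))‖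
      ≤ ‖q‖ * |1 - ‖‖q‖⁻¹ • (x - q)‖| :=
        mul_le_mul_of_nonneg_left (norm_inv_norm_sub_one_smul_le _) (norm_nonneg q)
    _ ≤ |‖q‖ - ‖x - q‖| := mul_abs_one_sub_norm_inv_smul_le (norm_nonneg q) _
    _ ≤ ‖x‖ := abs_norm_sub_norm_sub_le q x
    _ ≤ 3 * ‖x‖ := by linarith [norm_nonneg x]

theorem stmt_15 {d : ℕ} (q x : EuclideanSpace ℝ (Fin d)) (hq : 0 < ‖q‖) (hxq : x ≠ q)
    (hx : ‖x‖ ≤ ‖q‖ / 2) :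
    ‖q‖ * ‖(‖‖q‖⁻¹ • x - ‖q‖⁻¹ • q‖⁻¹ - 1) • (‖q‖⁻¹ • x - ‖q‖⁻¹ • q)‖ ≤ 3 * ‖x‖ :=
  stmt_15_general q x
end
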